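/- arXiv:0810.0295 — 5 statements merged into one kernel-verified Lean document; each statement's English description precedes it below -/
import Mathlib

section
/- A graded poset P of odd rank in which every proper interval [x,y] with (x,y) \neq (\hat{0},\hat{1}) is Eulerian is itself Eulerian. -/
/-!
Write `S = ∑ z, (-1) ^ ρ z`. The Möbius function sums to zero over `[0̂, 1̂]` in its first and
in its second argument. With the Eulerian hypothesis on the lower intervals `[0̂, z]` the first
identity gives `μ(0̂, 1̂) = (-1) ^ ρ 1̂ - S = -1 - S`; on the upper intervals `[z, 1̂]` we have
`(-1) ^ (ρ 1̂ - ρ z) = -(-1) ^ ρ z` because `ρ 1̂` is odd, and the second identity gives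
`μ(0̂, 1̂) = -1 + S`. Hence `S = 0` and `μ(0̂, 1̂) = -1 = (-1) ^ ρ 1̂`.
-/

/-- The Möbius function of a finite poset. -/
noncomputable def muP (P : Type*) [PartialOrder P] [Fintype P] (x y : P) : ℤ :=
  letI := Classical.decEq P
  letI : @DecidableRel P P (· < ·) := Classical.decRel _
  letI : @DecidableRel P P (· ≤ ·) := Classical.decRel _
  letI := Fintype.toLocallyFiniteOrder (α := P)
  IncidenceAlgebra.mu ℤ x y

open Finset IncidenceAlgebra

lemma muP_eq_mu {P : Type*} [PartialOrder P] [Fintype P] [DecidableEq P] [LocallyFiniteOrder P]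
    (x y : P) : muP P x y = mu ℤ x y := by
  unfold muP
  congr!
  exact Subsingleton.elim _ _

theorem neg_one_pow_sub_of_odd {R : Type*} [Ring R] {k m : ℕ} (hkm : k ≤ m) (hm : Odd m) :
    (-1 : R) ^ (m - k) = -(-1) ^ k := by
  have h : (-1 : R) ^ (m - k) * (-1) ^ k = -1 := by
    rw [← pow_add, Nat.sub_add_cancel hkm, hm.neg_one_pow]
  rcases neg_one_pow_eq_or R k with hk | hk <;> simpa [hk] using h

section BoundedOrder

variable {𝕜 P : Type*} [Ring 𝕜] [PartialOrder P] [BoundedOrder P] [Fintype P] [DecidableEq P]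
  [LocallyFiniteOrder P]

theorem mu_bot_top_eq_sub_sum_of_mu_bot {f : P → 𝕜} (hne : (⊥ : P) ≠ ⊤)
    (hf : ∀ z ≠ ⊤, mu 𝕜 ⊥ z = f z) : mu 𝕜 (⊥ : P) ⊤ = f ⊤ - ∑ z, f z := by
  have hsum := sum_Icc_mu_right (𝕜 := 𝕜) (⊥ : P) ⊤
  rw [if_neg hne, Icc_bot_top, ← add_sum_erase _ _ (mem_univ ⊤),
    sum_congr rfl fun z hz => hf z (ne_of_mem_erase hz), sum_erase_eq_sub (mem_univ ⊤)] at hsum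
  rw [← sub_eq_zero, ← hsum]
  abel

theorem mu_bot_top_eq_sub_sum_of_mu_top {g : P → 𝕜} (hne : (⊥ : P) ≠ ⊤)
    (hg : ∀ z ≠ ⊥, mu 𝕜 z ⊤ = g z) : mu 𝕜 (⊥ : P) ⊤ = g ⊥ - ∑ z, g z := by
  have hsum := sum_Icc_mu_left (𝕜 := 𝕜) (⊥ : P) ⊤
  rw [if_neg hne, Icc_bot_top, ← add_sum_erase _ _ (mem_univ ⊥),
    sum_congr rfl fun z hz => hg z (ne_of_mem_erase hz), sum_erase_eq_sub (mem_univ ⊥)] at hsum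
  rw [← sub_eq_zero, ← hsum]
  abel

end BoundedOrder

theorem mu_bot_top_eq_neg_one_pow_of_odd {P : Type*} [PartialOrder P] [BoundedOrder P] [Fintype P]
    [DecidableEq P] [LocallyFiniteOrder P] {ρ : P → ℕ} (hρ : Monotone ρ) (hbot : ρ ⊥ = 0)
    (hodd : Odd (ρ ⊤)) (hlower : ∀ z ≠ ⊤, mu ℤ ⊥ z = (-1) ^ (ρ z - ρ ⊥))
    (hupper : ∀ z ≠ ⊥, mu ℤ z ⊤ = (-1) ^ (ρ ⊤ - ρ z)) :
    mu ℤ (⊥ : P) ⊤ = (-1) ^ (ρ ⊤ - ρ ⊥) := by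
  have hne : (⊥ : P) ≠ ⊤ := fun h => by simp [← h, hbot] at hodd
  have hμ_lower : mu ℤ (⊥ : P) ⊤ = (-1) ^ ρ ⊤ - ∑ z, (-1) ^ ρ z :=
    mu_bot_top_eq_sub_sum_of_mu_bot hne fun z hz => by rw [hlower z hz, hbot, Nat.sub_zero]
  have hμ_upper : mu ℤ (⊥ : P) ⊤ = -(-1) ^ ρ ⊥ - ∑ z, -(-1) ^ ρ z :=
    mu_bot_top_eq_sub_sum_of_mu_top hne fun z hz => by
      rw [hupper z hz, neg_one_pow_sub_of_odd (hρ le_top) hodd]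
  rw [hbot, pow_zero, sum_neg_distrib] at hμ_upper
  rw [hodd.neg_one_pow] at hμ_lower
  rw [hbot, Nat.sub_zero, hodd.neg_one_pow]
  linarith

theorem eulerian_of_proper_intervals_eulerian_general (n : ℕ) (P : Type*) [Fintype P]
    [PartialOrder P] [BoundedOrder P] (ρ : P → ℕ)
    (hbot : ρ ⊥ = 0) (htop : ρ ⊤ = n + 1)
    (hstrict : ∀ x y : P, x < y → ρ x < ρ y)
    (hodd : Odd (n + 1))
    (hproper : ∀ x y : P, x ≤ y → ¬(x = ⊥ ∧ y = ⊤) → muP P x y = (-1) ^ (ρ y - ρ x)) :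
    ∀ x y : P, x ≤ y → muP P x y = (-1) ^ (ρ y - ρ x) := by
  classical
  have : LocallyFiniteOrder P := Fintype.toLocallyFiniteOrder
  have hρ : StrictMono ρ := fun x y => hstrict x y
  simp only [muP_eq_mu] at hproper ⊢
  intro x y hxy
  by_cases h : x = ⊥ ∧ y = ⊤
  · obtain ⟨rfl, rfl⟩ := h
    exact mu_bot_top_eq_neg_one_pow_of_odd hρ.monotone hbot (htop ▸ hodd)
      (fun z hz => hproper ⊥ z bot_le (hz ∘ And.right))
      (fun z hz => hproper z ⊤ le_top (hz ∘ And.left))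
  · exact hproper x y hxy h

/-- A graded poset of odd rank in which every proper interval `[x,y]` with
`(x,y) ≠ (0̂,1̂)` is Eulerian is itself Eulerian. -/
theorem eulerian_of_proper_intervals_eulerian (n : ℕ) (P : Type*) [Fintype P]
    [PartialOrder P] [BoundedOrder P] (ρ : P → ℕ)
    (hbot : ρ ⊥ = 0) (htop : ρ ⊤ = n + 1)
    (hstrict : ∀ x y : P, x < y → ρ x < ρ y)
    (hcov : ∀ x y : P, x ⋖ y → ρ y = ρ x + 1)
    (hodd : Odd (n + 1))
    (hproper : ∀ x y : P, x ≤ y → ¬(x = ⊥ ∧ y = ⊤) → muP P x y = (-1) ^ (ρ y - ρ x)) :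
    ∀ x y : P, x ≤ y → muP P x y = (-1) ^ (ρ y - ρ x) :=
  eulerian_of_proper_intervals_eulerian_general n P ρ hbot htop hstrict hodd hproper
end

section
/- For a graded poset P, the ab-index equals the sum over all chains c = {\hat{0} = x_0 < x_1 < ... < x_k = \hat{1}} of the weight wt(c) = (a-b)^{\rho(x_0,x_1)-1} b (a-b)^{\rho(x_1,x_2)-1} b ... b (a-b)^{\rho(x_{k-1},x_k)-1}. -/
open Finset

/-- The ring `ℤ⟨a,b⟩` of noncommutative polynomials in the variables `a` and `b`,
realized as the monoid algebra of the free monoid on two letters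
(`false` encodes the letter `a` and `true` the letter `b`). -/
abbrev AB : Type := MonoidAlgebra ℤ (FreeMonoid Bool)

/-- The variable `a`. -/
noncomputable def aV : AB := MonoidAlgebra.single (FreeMonoid.ofList [false]) 1

/-- The variable `b`. -/
noncomputable def bV : AB := MonoidAlgebra.single (FreeMonoid.ofList [true]) 1

/-- The `ab`-monomial `u_S` of degree `n`, with `b` in the positions of `S`. -/
def word (n : ℕ) (S : Finset ℕ) : FreeMonoid Bool :=
  FreeMonoid.ofList (List.ofFn fun i : Fin n => decide ((i : ℕ) + 1 ∈ S))

/-- The flag `f`-vector entry `f_S`. -/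
noncomputable def flagF (P : Type*) [PartialOrder P] (ρ : P → ℕ) (S : Finset ℕ) : ℤ :=
  ({c : Finset P | IsChain (· ≤ ·) (↑c : Set P) ∧ c.image ρ = S} : Set (Finset P)).ncard

/-- The flag `h`-vector entry `h_S`. -/
noncomputable def flagH (P : Type*) [PartialOrder P] (ρ : P → ℕ) (S : Finset ℕ) : ℤ :=
  ∑ T ∈ S.powerset, (-1) ^ (S.card - T.card) * flagF P ρ T

/-- The `ab`-index `Ψ(P) = ∑_S h_S u_S` of a poset `P` of rank `n+1` with rank
function `ρ` (the elements of ranks `1,…,n` are the proper part of `P`). -/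
noncomputable def Psi (P : Type*) [PartialOrder P] (ρ : P → ℕ) (n : ℕ) : AB :=
  ∑ S ∈ (Finset.Icc 1 n).powerset, MonoidAlgebra.single (word n S) (flagH P ρ S)

open scoped Classical

/-- Helper for the weight of a chain: given the previous rank `r` and the list of
remaining ranks, produce `b (a-b)^{g_1} b (a-b)^{g_2} ⋯`. -/
noncomputable def wtFrom (r : ℕ) : List ℕ → AB
  | [] => 1
  | s :: t => bV * (aV - bV) ^ (s - r - 1) * wtFrom s t

/-- The weight `wt(c) = (a-b)^{ρ(x_0,x_1)-1} b (a-b)^{ρ(x_1,x_2)-1} b ⋯ b (a-b)^{ρ(x_{k-1},x_k)-1}`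
of a chain, given its list of ranks. -/
noncomputable def wt : List ℕ → AB
  | [] => 1
  | [_] => 1
  | r :: s :: t => (aV - bV) ^ (s - r - 1) * wtFrom s t

/-!
Unfolding `h_S` and exchanging the two sums gives `Ψ(P) = ∑_T f_T E_T` over `T ⊆ [n]`, where
`E_T = markedProd (List.range' 1 n) T (a - b) b` is the product with `b` in the positions of `T`
and `a - b` in the others: the alternating sum
`∑_{T ⊆ S ⊆ [n]} (-1)^{|S - T|} u_S` is exactly the expansion of this product. A chain
`0̂ = x_0 < ⋯ < x_k = 1̂` is determined by the chain `{x_1, …, x_{k-1}}` of the proper part, and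
since a gap `ρ(x_{i-1}, x_i)` contributes `(a - b)^{ρ(x_{i-1}, x_i) - 1}` for the ranks strictly
between `x_{i-1}` and `x_i`, its weight is `E_T` for `T` the set of ranks of that chain. So both
sides equal `∑_c E_{ρ(c)}` over the chains `c` of the proper part.
-/

section MarkedProd

variable {R : Type*}

def markedProd [Monoid R] (L : List ℕ) (T : Finset ℕ) (x y : R) : R :=
  (L.map fun i => if i ∈ T then y else x).prod

section Monoid

variable [Monoid R] {L L' : List ℕ} {T T' : Finset ℕ} {x y : R}

@[simp]
lemma markedProd_nil : markedProd [] T x y = 1 := rfl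

@[simp]
lemma markedProd_cons (i : ℕ) :
    markedProd (i :: L) T x y = (if i ∈ T then y else x) * markedProd L T x y := by
  simp [markedProd]

lemma markedProd_append :
    markedProd (L ++ L') T x y = markedProd L T x y * markedProd L' T x y := by
  simp [markedProd]

lemma markedProd_congr (h : ∀ i ∈ L, i ∈ T ↔ i ∈ T') :
    markedProd L T x y = markedProd L T' x y := by
  unfold markedProd
  congr 1
  exact List.map_congr_left fun i hi => by simp [h i hi]

lemma markedProd_eq_pow (h : ∀ i ∈ L, i ∉ T) : markedProd L T x y = x ^ L.length := by
  unfold markedProd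
  rw [List.map_congr_left (g := fun _ => x) fun i hi => if_neg (h i hi), List.map_const',
    List.prod_replicate]

end Monoid

variable [Ring R]

lemma markedProd_sub_eq_sum_powerset {L : List ℕ} (hL : L.Nodup) (T : Finset ℕ) (x y : R) :
    markedProd L T (x - y) y =
      ∑ U ∈ (L.toFinset \ T).powerset, (-1 : ℤ) ^ U.card • markedProd L (T ∪ U) x y := by
  induction L with
  | nil => simp
  | cons i L ih =>
    obtain ⟨hiL, hL⟩ := List.nodup_cons.mp hL
    rw [markedProd_cons, ih hL, List.toFinset_cons]
    by_cases hiT : i ∈ T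
    · rw [insert_sdiff_of_mem _ hiT, if_pos hiT, mul_sum]
      refine sum_congr rfl fun U _ => ?_
      rw [markedProd_cons, if_pos (mem_union_left U hiT), mul_smul_comm]
    · have hiLT : i ∉ L.toFinset \ T := fun h => hiL (List.mem_toFinset.mp (mem_sdiff.mp h).1)
      rw [insert_sdiff_of_notMem _ hiT, if_neg hiT, sum_powerset_insert hiLT, sub_mul, mul_sum,
        mul_sum, sub_eq_add_neg, ← sum_neg_distrib]
      congr 1
      · refine sum_congr rfl fun U hU => ?_
        have hiTU : i ∉ T ∪ U := by
          simpa [hiT] using fun h => hiLT (mem_powerset.mp hU h)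
        rw [markedProd_cons, if_neg hiTU, mul_smul_comm]
      · refine sum_congr rfl fun U hU => ?_
        have hiU : i ∉ U := fun h => hiLT (mem_powerset.mp hU h)
        rw [markedProd_cons, if_pos (by simp), card_insert_of_notMem hiU, pow_succ, mul_neg_one,
          neg_smul, mul_smul_comm,
          markedProd_congr (T := T ∪ insert i U) (T' := T ∪ U) fun j hj => by
            simp [show j ≠ i from fun h => hiL (h ▸ hj)]]

lemma markedProd_sub_eq_sum_Icc {L : List ℕ} (hL : L.Nodup) {T : Finset ℕ} (hT : T ⊆ L.toFinset)
    (x y : R) :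
    markedProd L T (x - y) y =
      ∑ S ∈ Icc T L.toFinset, (-1 : ℤ) ^ (S.card - T.card) • markedProd L S x y := by
  have hdisj : ∀ U ∈ (L.toFinset \ T).powerset, Disjoint T U := fun U hU =>
    disjoint_sdiff.mono_right (mem_powerset.mp hU)
  rw [Icc_eq_image_powerset hT, sum_image, markedProd_sub_eq_sum_powerset hL]
  · refine sum_congr rfl fun U hU => ?_
    rw [card_union_of_disjoint (hdisj U hU), Nat.add_sub_cancel_left]
  · intro U hU V hV hUV
    rw [← union_sdiff_cancel_left (hdisj U hU), ← union_sdiff_cancel_left (hdisj V hV)]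
    exact congrArg (· \ T) hUV

end MarkedProd

lemma single_word_eq_markedProd (n : ℕ) (S : Finset ℕ) :
    MonoidAlgebra.single (word n S) 1 = markedProd (List.range' 1 n) S aV bV := by
  induction n with
  | zero => rfl
  | succ n ih =>
    have hword : word (n + 1) S = word n S * FreeMonoid.ofList [decide (n + 1 ∈ S)] := by
      simp only [word, List.ofFn_succ_last]
      rfl
    rw [hword, ← mul_one (1 : ℤ), ← MonoidAlgebra.single_mul_single, ih, List.range'_1_concat,
      markedProd_append, markedProd_cons, markedProd_nil, mul_one, add_comm 1 n]
    by_cases h : n + 1 ∈ S <;> simp [h, aV, bV]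

lemma Psi_eq_sum_flagF_smul (P : Type*) [PartialOrder P] (ρ : P → ℕ) (n : ℕ) :
    Psi P ρ n =
      ∑ T ∈ (Icc 1 n).powerset, flagF P ρ T • markedProd (List.range' 1 n) T (aV - bV) bV := by
  have hexpand : ∀ T ∈ (Icc 1 n).powerset, markedProd (List.range' 1 n) T (aV - bV) bV =
      ∑ S ∈ Icc T (Icc 1 n), (-1 : ℤ) ^ (S.card - T.card) • MonoidAlgebra.single (word n S) 1 :=
    fun T hT => by
      rw [markedProd_sub_eq_sum_Icc List.nodup_range', List.toFinset_range'_1_1]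
      · simp only [single_word_eq_markedProd]
      · rwa [List.toFinset_range'_1_1, ← mem_powerset]
  calc Psi P ρ n
      = ∑ S ∈ (Icc 1 n).powerset, ∑ T ∈ S.powerset,
          flagF P ρ T • (-1 : ℤ) ^ (S.card - T.card) • MonoidAlgebra.single (word n S) 1 := by
        refine sum_congr rfl fun S _ => ?_
        rw [flagH, ← MonoidAlgebra.singleAddHom_apply, map_sum]
        refine sum_congr rfl fun T _ => ?_
        simp [mul_comm]
    _ = ∑ T ∈ (Icc 1 n).powerset, ∑ S ∈ Icc T (Icc 1 n),
          flagF P ρ T • (-1 : ℤ) ^ (S.card - T.card) • MonoidAlgebra.single (word n S) 1 :=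
        sum_comm' fun S T => by
          simp only [mem_powerset, mem_Icc]
          exact ⟨fun ⟨hS, hT⟩ => ⟨⟨hT, hS⟩, hT.trans hS⟩, fun ⟨⟨hT, hS⟩, _⟩ => ⟨hS, hT⟩⟩
    _ = _ := sum_congr rfl fun T hT => by rw [hexpand T hT, smul_sum]

lemma sum_powerset_flagF_smul {P : Type*} [PartialOrder P] [Fintype P] (ρ : P → ℕ)
    {M : Type*} [AddCommGroup M] (A : Finset ℕ) (F : Finset ℕ → M) :
    ∑ T ∈ A.powerset, flagF P ρ T • F T =
      ∑ c ∈ univ.filter (fun c : Finset P => IsChain (· ≤ ·) (c : Set P) ∧ c.image ρ ⊆ A),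
        F (c.image ρ) := by
  have hflagF : ∀ T, flagF P ρ T = ((univ.filter fun c : Finset P =>
      IsChain (· ≤ ·) (c : Set P)).filter fun c => c.image ρ = T).card := fun T => by
    rw [flagF, filter_filter, ← Set.ncard_coe_finset, coe_filter]
    simp
  simp_rw [hflagF, natCast_zsmul, ← sum_const]
  rw [sum_fiberwise_eq_sum_filter', filter_filter]
  simp_rw [mem_powerset]

lemma markedProd_range'_eq_pow_mul {R : Type*} [Monoid R] {r s e : ℕ} {t : List ℕ}
    {T : Finset ℕ} {x y : R} (hsorted : (r :: s :: t).Pairwise (· < ·))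
    (hlast : (s :: t).getLast? = some e) (hT : ∀ i, r < i → i < e → (i ∈ T ↔ i ∈ r :: s :: t)) :
    markedProd (List.range' (r + 1) (e - r - 1)) T x y =
      x ^ (s - r - 1) * markedProd (List.range' s (e - s)) T x y := by
  have hrs : r < s := List.rel_of_pairwise_cons hsorted List.mem_cons_self
  have hst : ∀ z ∈ t, s < z := fun z hz => List.rel_of_pairwise_cons hsorted.of_cons hz
  have hse : s ≤ e := by
    rcases List.mem_cons.mp (List.mem_of_getLast? hlast) with rfl | he
    exacts [le_rfl, (hst e he).le]
  have hgap : ∀ i ∈ List.range' (r + 1) (s - r - 1), i ∉ T := fun i hi hiT => by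
    rw [List.mem_range'_1] at hi
    rcases List.mem_cons.mp ((hT i (by omega) (by omega)).mp hiT) with rfl | hi'
    · omega
    rcases List.mem_cons.mp hi' with rfl | hi'
    · omega
    exact absurd (hst i hi') (by omega)
  rw [show e - r - 1 = (s - r - 1) + (e - s) by omega, ← List.range'_append_1, markedProd_append,
    markedProd_eq_pow hgap, List.length_range', show r + 1 + (s - r - 1) = s by omega]

lemma wtFrom_eq_markedProd {r e : ℕ} {t : List ℕ} {T : Finset ℕ}
    (hsorted : (r :: t).Pairwise (· < ·)) (hlast : (r :: t).getLast? = some e)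
    (hT : ∀ i, r ≤ i → i < e → (i ∈ T ↔ i ∈ r :: t)) :
    wtFrom r t = markedProd (List.range' r (e - r)) T (aV - bV) bV := by
  induction t generalizing r with
  | nil =>
    obtain rfl : r = e := by simpa using hlast
    simp [wtFrom]
  | cons s t ih =>
    have hrs : r < s := List.rel_of_pairwise_cons hsorted List.mem_cons_self
    rw [List.getLast?_cons_cons] at hlast
    have hre : r < e := hrs.trans_le <| by
      rcases List.mem_cons.mp (List.mem_of_getLast? hlast) with rfl | he
      exacts [le_rfl, (List.rel_of_pairwise_cons hsorted.of_cons he).le]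
    have hwt := ih hsorted.of_cons hlast fun i hsi hie => by
      rw [hT i (by omega) hie, List.mem_cons, or_iff_right (by omega)]
    rw [wtFrom, hwt, show e - r = (e - r - 1) + 1 by omega, List.range'_succ, markedProd_cons,
      if_pos ((hT r le_rfl hre).mpr List.mem_cons_self), mul_assoc,
      ← markedProd_range'_eq_pow_mul hsorted hlast fun i hri hie => hT i hri.le hie]

lemma wt_eq_markedProd {r e : ℕ} {t : List ℕ} {T : Finset ℕ}
    (hsorted : (r :: t).Pairwise (· < ·)) (hlast : (r :: t).getLast? = some e)
    (hT : ∀ i, r < i → i < e → (i ∈ T ↔ i ∈ r :: t)) :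
    wt (r :: t) = markedProd (List.range' (r + 1) (e - r - 1)) T (aV - bV) bV := by
  cases t with
  | nil =>
    obtain rfl : r = e := by simpa using hlast
    simp [wt]
  | cons s t =>
    rw [List.getLast?_cons_cons] at hlast
    have hrs : r < s := List.rel_of_pairwise_cons hsorted List.mem_cons_self
    rw [wt, markedProd_range'_eq_pow_mul hsorted hlast hT, wtFrom_eq_markedProd hsorted.of_cons
      hlast fun i hsi hie => by rw [hT i (by omega) hie, List.mem_cons, or_iff_right (by omega)]]

lemma StrictMono.injOn_of_isChain {P β : Type*} [PartialOrder P] [Preorder β] {ρ : P → β}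
    (hρ : StrictMono ρ) {s : Set P} (hs : IsChain (· ≤ ·) s) : Set.InjOn ρ s := by
  intro x hx y hy hxy
  by_contra hne
  rcases hs hx hy hne with hle | hle
  · exact (hρ (hle.lt_of_ne hne)).ne hxy
  · exact (hρ (hle.lt_of_ne (Ne.symm hne))).ne' hxy

lemma IsChain.exists_strictMono_fin_image_eq {P : Type*} [PartialOrder P] {s : Finset P}
    (hs : IsChain (· ≤ ·) (s : Set P)) {k : ℕ} (hk : s.card = k) :
    ∃ f : Fin k → P, StrictMono f ∧ univ.image f = s := by
  let := hs.linearOrder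
  let e := Fintype.orderIsoFinOfCardEq (s : Set P) (by simpa using hk)
  refine ⟨fun i => e i, fun i j hij => e.strictMono hij, ?_⟩
  ext x
  simp only [mem_image, mem_univ, true_and]
  exact ⟨fun ⟨i, hi⟩ => hi ▸ (e i).2, fun hx => ⟨e.symm ⟨x, hx⟩, by simp⟩⟩

lemma IsChain.exists_strictMono_bot_top {P : Type*} [PartialOrder P] [BoundedOrder P]
    [Nontrivial P] {c : Finset P} (hc : IsChain (· ≤ ·) (c : Set P)) (hbot : ⊥ ∉ c)
    (htop : ⊤ ∉ c) :
    ∃ f : Fin (c.card + 1 + 1) → P, StrictMono f ∧ f 0 = ⊥ ∧ f (Fin.last _) = ⊤ ∧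
      univ.image f \ {⊥, ⊤} = c := by
  have hchain : IsChain (· ≤ ·) (↑(insert ⊥ (insert ⊤ c) : Finset P) : Set P) := by
    simp only [coe_insert]
    exact (hc.insert fun _ _ _ => .inr le_top).insert fun _ _ _ => .inl bot_le
  have hcard : (insert ⊥ (insert ⊤ c)).card = c.card + 1 + 1 := by
    rw [card_insert_of_notMem (by simp [hbot]), card_insert_of_notMem htop]
  obtain ⟨f, hf, himage⟩ := hchain.exists_strictMono_fin_image_eq hcard
  have hmem : ∀ x ∈ insert ⊥ (insert ⊤ c), ∃ i, f i = x := fun x hx => by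
    simpa [← himage] using hx
  obtain ⟨i, hi⟩ := hmem ⊥ (by simp)
  obtain ⟨j, hj⟩ := hmem ⊤ (by simp)
  refine ⟨f, hf, le_bot_iff.mp (hi ▸ hf.monotone (Fin.zero_le i)),
    top_le_iff.mp (hj ▸ hf.monotone (Fin.le_last j)), ?_⟩
  rw [himage]
  ext x
  by_cases hx : x = ⊥ ∨ x = ⊤
  · rcases hx with rfl | rfl <;> simp [hbot, htop]
  · simp_all

section GradedPoset

variable {P : Type*} [PartialOrder P] [BoundedOrder P] {ρ : P → ℕ} {n : ℕ}

lemma rank_mem_Icc_iff (hρ : StrictMono ρ) (hbot : ρ ⊥ = 0) (htop : ρ ⊤ = n + 1) {x : P} :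
    ρ x ∈ Icc 1 n ↔ x ≠ ⊥ ∧ x ≠ ⊤ := by
  rw [mem_Icc]
  constructor
  · rintro ⟨h1, h2⟩
    constructor <;> rintro rfl <;> omega
  · rintro ⟨hb, ht⟩
    have h1 := hρ (bot_lt_iff_ne_bot.mpr hb)
    have h2 := hρ (lt_top_iff_ne_top.mpr ht)
    omega

lemma sum_strictMono_bot_top_eq_sum_chains [Fintype P] {M : Type*} [AddCommMonoid M]
    (hρ : StrictMono ρ) (hbot : ρ ⊥ = 0) (htop : ρ ⊤ = n + 1) (Φ : Finset P → M) :
    ∑ k ∈ Icc 1 (n + 1), ∑ f ∈ univ.filter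
        (fun f : Fin (k + 1) → P => StrictMono f ∧ f 0 = ⊥ ∧ f (Fin.last k) = ⊤),
      Φ (univ.image f \ {⊥, ⊤}) =
    ∑ c ∈ univ.filter (fun c : Finset P => IsChain (· ≤ ·) (c : Set P) ∧ c.image ρ ⊆ Icc 1 n),
      Φ c := by
  have : Nontrivial P := ⟨⊥, ⊤, fun h => by simpa [hbot, htop] using congrArg ρ h⟩
  have himage : ∀ {k} {f : Fin (k + 1) → P}, f 0 = ⊥ → f (Fin.last k) = ⊤ →
      univ.image f \ {⊥, ⊤} ∪ {⊥, ⊤} = univ.image f := fun h0 hlast =>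
    sdiff_union_of_subset <| by simp [insert_subset_iff, ← h0, ← hlast]
  rw [sum_sigma']
  refine sum_bij (fun x _ => univ.image x.2 \ {⊥, ⊤}) ?_ ?_ ?_ fun _ _ => rfl
  · rintro ⟨k, f⟩ hf
    simp only [mem_sigma, mem_filter, mem_univ, true_and] at hf ⊢
    refine ⟨hf.2.1.monotone.isChain_range.mono (by simp), fun m hm => ?_⟩
    obtain ⟨x, hx, rfl⟩ := mem_image.mp hm
    simp only [mem_sdiff, mem_insert, mem_singleton, not_or] at hx
    exact (rank_mem_Icc_iff hρ hbot htop).mpr hx.2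
  · rintro ⟨k, f⟩ hf ⟨l, g⟩ hg hfg
    simp only [mem_sigma, mem_filter, mem_univ, true_and] at hf hg hfg
    have hrange : univ.image f = univ.image g := by
      rw [← himage hf.2.2.1 hf.2.2.2, ← himage hg.2.2.1 hg.2.2.2, hfg]
    obtain rfl : k = l := by
      simpa [card_image_of_injective _ hf.2.1.injective,
        card_image_of_injective _ hg.2.1.injective] using congrArg card hrange
    have hrange' : Set.range f = Set.range g := by
      simpa using congrArg (fun s : Finset P => (s : Set P)) hrange
    rw [(hf.2.1.range_inj hg.2.1).mp hrange']
  · intro c hc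
    simp only [mem_filter, mem_univ, true_and] at hc
    have hcard : c.card ≤ n := by
      simpa using card_le_card_of_injOn ρ (fun x hx => hc.2 (mem_image_of_mem ρ hx))
        (hρ.injOn_of_isChain hc.1)
    have hinterior : ∀ x ∈ c, x ≠ ⊥ ∧ x ≠ ⊤ := fun x hx =>
      (rank_mem_Icc_iff hρ hbot htop).mp (hc.2 (mem_image_of_mem ρ hx))
    obtain ⟨f, hf, h0, hlast, hfc⟩ := hc.1.exists_strictMono_bot_top
      (fun h => (hinterior ⊥ h).1 rfl) (fun h => (hinterior ⊤ h).2 rfl)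
    exact ⟨⟨c.card + 1, f⟩, by simp [hf, h0, hlast]; omega, hfc⟩

lemma wt_ofFn_rank_eq_markedProd (hρ : StrictMono ρ) (hbot : ρ ⊥ = 0) (htop : ρ ⊤ = n + 1)
    {k : ℕ} {f : Fin (k + 1) → P} (hf : StrictMono f) (h0 : f 0 = ⊥)
    (hlast : f (Fin.last k) = ⊤) :
    wt (List.ofFn fun i => ρ (f i)) =
      markedProd (List.range' 1 n) ((univ.image f \ {⊥, ⊤}).image ρ) (aV - bV) bV := by
  have hsorted : (List.ofFn fun i => ρ (f i)).Pairwise (· < ·) :=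
    List.pairwise_ofFn.mpr fun i j hij => hρ (hf hij)
  have hlast' : (List.ofFn fun i => ρ (f i)).getLast? = some (n + 1) := by
    rw [List.getLast?_eq_some_getLast (by simp), List.getLast_ofFn, ← htop, ← hlast]
    rfl
  have hT : ∀ i, 0 < i → i < n + 1 →
      (i ∈ (univ.image f \ {⊥, ⊤}).image ρ ↔ i ∈ List.ofFn fun i => ρ (f i)) := by
    intro i hi hin
    simp only [mem_image, mem_sdiff, mem_univ, true_and, List.mem_ofFn]
    constructor
    · rintro ⟨_, ⟨⟨j, rfl⟩, _⟩, rfl⟩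
      exact ⟨j, rfl⟩
    · rintro ⟨j, rfl⟩
      have := (rank_mem_Icc_iff hρ hbot htop).mp (mem_Icc.mpr ⟨hi, by omega⟩)
      exact ⟨f j, ⟨⟨j, rfl⟩, by simpa using this⟩, rfl⟩
  rw [List.ofFn_succ, h0, hbot] at hsorted hlast' hT ⊢
  exact wt_eq_markedProd hsorted hlast' hT

end GradedPoset

theorem Psi_eq_sum_wt_general (n : ℕ) (P : Type*) [Fintype P] [PartialOrder P]
    [BoundedOrder P] (ρ : P → ℕ)
    (hbot : ρ ⊥ = 0) (htop : ρ ⊤ = n + 1)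
    (hstrict : ∀ x y : P, x < y → ρ x < ρ y) :
    Psi P ρ n =
      ∑ k ∈ Finset.Icc 1 (n + 1),
        ∑ f ∈ Finset.univ.filter
            (fun f : Fin (k + 1) → P => StrictMono f ∧ f 0 = ⊥ ∧ f (Fin.last k) = ⊤),
          wt (List.ofFn fun i => ρ (f i)) := by
  have hρ : StrictMono ρ := fun x y => hstrict x y
  rw [Psi_eq_sum_flagF_smul, sum_powerset_flagF_smul,
    ← sum_strictMono_bot_top_eq_sum_chains hρ hbot htop]
  refine sum_congr rfl fun k _ => sum_congr rfl fun f hf => ?_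
  obtain ⟨hf, h0, hlast⟩ := (mem_filter.mp hf).2
  rw [wt_ofFn_rank_eq_markedProd hρ hbot htop hf h0 hlast]

/-- The `ab`-index of a graded poset equals the sum of the weights of all chains
`0̂ = x_0 < x_1 < ⋯ < x_k = 1̂`. -/
theorem Psi_eq_sum_wt (n : ℕ) (P : Type*) [Fintype P] [PartialOrder P]
    [BoundedOrder P] (ρ : P → ℕ)
    (hbot : ρ ⊥ = 0) (htop : ρ ⊤ = n + 1)
    (hstrict : ∀ x y : P, x < y → ρ x < ρ y)
    (hcov : ∀ x y : P, x ⋖ y → ρ y = ρ x + 1) :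
    Psi P ρ n =
      ∑ k ∈ Finset.Icc 1 (n + 1),
        ∑ f ∈ Finset.univ.filter
            (fun f : Fin (k + 1) → P => StrictMono f ∧ f 0 = ⊥ ∧ f (Fin.last k) = ⊤),
          wt (List.ofFn fun i => ρ (f i)) :=
  Psi_eq_sum_wt_general n P ρ hbot htop hstrict
end

section
/- For a graded poset P of rank at least 2, the ab-index satisfies the recursion \Psi(P) = (a-b)^{\rho(P)-1} + \sum_{\hat{0} < x < \hat{1}} (a-b)^{\rho(x)-1} \cdot b \cdot \Psi([x,\hat{1}]). -/
open Finset

open scoped Classical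


/-!
Expanding `h_S = ∑_{T ⊆ S} (-1)^{|S - T|} f_T` rewrites `Ψ(P) = ∑_S h_S u_S` as
`Ψ(P) = ∑_T f_T w_T`, where `w_T` has `b` in the positions of `T` and `a - b` elsewhere.
The term `T = ∅` is `(a - b)^n`. For `T ≠ ∅` with least element `m`, a chain with rank set `T`
is its element `x` of rank `m` followed by a chain of `[x, 1̂]` with rank set `T - m`, and
`w_T = (a - b)^{m-1} b w_{T - m}`; grouping the chains by `x` gives the recursion.
-/

/-- Positions are numbered from `1`, as in `word`. -/
noncomputable def abProd (n : ℕ) (c : ℕ → AB) : AB :=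
  (List.ofFn fun i : Fin n => c (i + 1)).prod

lemma abProd_add (p q : ℕ) (c : ℕ → AB) :
    abProd (p + q) c = abProd p c * abProd q (fun j => c (p + j)) := by
  simp [abProd, List.ofFn_add, add_assoc]

lemma abProd_succ (n : ℕ) (c : ℕ → AB) : abProd (n + 1) c = abProd n c * c (n + 1) := by
  rw [abProd_add]
  simp [abProd]

lemma abProd_congr {n : ℕ} {c c' : ℕ → AB} (h : ∀ i ∈ Icc 1 n, c i = c' i) :
    abProd n c = abProd n c' := by
  unfold abProd
  congr 1
  exact List.ofFn_inj.2 <| funext fun i => h _ (mem_Icc.2 ⟨by omega, by omega⟩)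

lemma abProd_const (n : ℕ) (r : AB) : abProd n (fun _ => r) = r ^ n := by
  simp [abProd]

lemma abProd_sub (n : ℕ) (x y : ℕ → AB) :
    abProd n (x - y) = ∑ S ∈ (Icc 1 n).powerset, (-1 : ℤ) ^ #S • abProd n (S.piecewise y x) := by
  induction n with
  | zero => simp [abProd]
  | succ n ih =>
    have hnew : n + 1 ∉ Icc 1 n := by simp
    have hlow : ∀ S ∈ (Icc 1 n).powerset, ∀ i ∈ Icc 1 n,
        (insert (n + 1) S).piecewise y x i = S.piecewise y x i := fun S _ i hi => by
      rw [piecewise_insert, Function.update_of_ne (by rintro rfl; exact hnew hi)]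
    have hout : ∀ S ∈ (Icc 1 n).powerset, n + 1 ∉ S := fun S hS h => hnew (mem_powerset.1 hS h)
    rw [← insert_Icc_right_eq_Icc_add_one (by omega), sum_powerset_insert hnew, abProd_succ, ih,
      Pi.sub_apply, mul_sub, sum_mul, sum_mul, sub_eq_add_neg, ← sum_neg_distrib]
    congr 1 <;> refine sum_congr rfl fun S hS => ?_
    · rw [abProd_succ, piecewise_eq_of_notMem _ _ _ (hout S hS), smul_mul_assoc]
    · rw [abProd_succ, abProd_congr (hlow S hS), piecewise_insert_self,
        card_insert_of_notMem (hout S hS), pow_succ, mul_neg_one, neg_smul, smul_mul_assoc]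

lemma single_ofList_one (l : List Bool) :
    MonoidAlgebra.single (FreeMonoid.ofList l) (1 : ℤ) =
      (l.map fun c => if c then bV else aV).prod := by
  induction l with
  | nil => rfl
  | cons c l ih =>
    rw [FreeMonoid.ofList_cons, ← mul_one (1 : ℤ), ← MonoidAlgebra.single_mul_single, ih,
      List.map_cons, List.prod_cons]
    cases c <;> rfl

lemma single_word_one (n : ℕ) (S : Finset ℕ) :
    MonoidAlgebra.single (word n S) (1 : ℤ) =
      abProd n (S.piecewise (fun _ => bV) (fun _ => aV)) := by
  rw [word, single_ofList_one, List.map_ofFn, abProd]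
  congr 1
  exact List.ofFn_inj.2 <| funext fun i => by by_cases h : (i : ℕ) + 1 ∈ S <;> simp [h]

lemma abProd_eq_zero {n : ℕ} {c : ℕ → AB} {i : ℕ} (hi : i ∈ Icc 1 n) (hc : c i = 0) :
    abProd n c = 0 := by
  obtain ⟨h1, h2⟩ := mem_Icc.1 hi
  refine List.prod_eq_zero (List.mem_ofFn.2 ⟨⟨i - 1, by omega⟩, ?_⟩)
  simpa [Nat.sub_add_cancel h1] using hc

noncomputable def fMonomial (n : ℕ) (T : Finset ℕ) : AB :=
  abProd n (T.piecewise (fun _ => bV) (fun _ => aV - bV))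

lemma fMonomial_eq_sum (n : ℕ) (T : Finset ℕ) :
    fMonomial n T = ∑ U ∈ (Icc 1 n \ T).powerset,
      (-1 : ℤ) ^ #U • MonoidAlgebra.single (word n (T ∪ U)) (1 : ℤ) := by
  have hsub : T.piecewise (fun _ => bV) (fun _ => aV - bV) =
      T.piecewise (fun _ => bV) (fun _ => aV) - T.piecewise 0 (fun _ => bV) := by
    funext i; by_cases h : i ∈ T <;> simp [h]
  -- The subtracted factor vanishes on `T`, so only the `S` disjoint from `T` survive.
  rw [fMonomial, hsub, abProd_sub]
  refine (sum_subset (powerset_mono.2 sdiff_subset) fun S hSI hST => ?_).symm.trans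
    (sum_congr rfl fun S hST => ?_)
  · obtain ⟨i, hiS, hiT⟩ : ∃ i ∈ S, i ∈ T := by
      by_contra! h
      exact hST (mem_powerset.2 fun i hi => mem_sdiff.2 ⟨mem_powerset.1 hSI hi, h i hi⟩)
    rw [abProd_eq_zero (mem_powerset.1 hSI hiS) (by simp [hiS, hiT]), smul_zero]
  · have hST' : ∀ i ∈ S, i ∉ T := fun i hi => (mem_sdiff.1 (mem_powerset.1 hST hi)).2
    rw [single_word_one]
    congr 2
    funext i
    by_cases hS : i ∈ S
    · simp [hS, hST' i hS]
    · by_cases hT : i ∈ T <;> simp [hS, hT]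

lemma Psi_eq_sum_flagF_smul_fMonomial (P : Type*) [PartialOrder P] (ρ : P → ℕ) (n : ℕ) :
    Psi P ρ n = ∑ T ∈ (Icc 1 n).powerset, flagF P ρ T • fMonomial n T := by
  have hreindex : ∀ T ∈ (Icc 1 n).powerset, flagF P ρ T • fMonomial n T =
      ∑ S ∈ Icc T (Icc 1 n), ((-1 : ℤ) ^ (#S - #T) * flagF P ρ T) •
        MonoidAlgebra.single (word n S) (1 : ℤ) := by
    intro T hT
    have hdisj : ∀ U ∈ (Icc 1 n \ T).powerset, Disjoint T U := fun U hU =>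
      disjoint_of_subset_right (mem_powerset.1 hU) disjoint_sdiff
    rw [fMonomial_eq_sum, Icc_eq_image_powerset (mem_powerset.1 hT), smul_sum,
      sum_image fun U hU V hV hUV => by
        rw [← union_sdiff_cancel_left (hdisj U hU), hUV, union_sdiff_cancel_left (hdisj V hV)]]
    refine sum_congr rfl fun U hU => ?_
    rw [card_union_of_disjoint (hdisj U hU), Nat.add_sub_cancel_left, mul_comm, mul_smul]
  rw [sum_congr rfl hreindex, sum_comm' (t' := (Icc 1 n).powerset) (s' := fun S => S.powerset)]
  · refine sum_congr rfl fun S _ => ?_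
    rw [← sum_smul, ← flagH, MonoidAlgebra.smul_single', mul_one]
  · intro T S
    simp only [mem_powerset, mem_Icc]
    exact ⟨fun ⟨hT, hTS, hS⟩ => ⟨hTS, hS⟩, fun ⟨hTS, hS⟩ => ⟨hTS.trans hS, hTS, hS⟩⟩

lemma fMonomial_empty (n : ℕ) : fMonomial n ∅ = (aV - bV) ^ n := by
  rw [fMonomial, piecewise_empty, abProd_const]

lemma fMonomial_insert_image_add {m n : ℕ} (hm : 1 ≤ m) (hmn : m ≤ n) (T : Finset ℕ) :
    fMonomial n (insert m (T.image (· + m))) = (aV - bV) ^ (m - 1) * bV * fMonomial (n - m) T := by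
  obtain ⟨j, rfl⟩ : ∃ j, m = j + 1 := ⟨m - 1, by omega⟩
  obtain ⟨k, rfl⟩ : ∃ k, n = j + 1 + k := ⟨n - (j + 1), by omega⟩
  rw [Nat.add_sub_cancel, Nat.add_sub_cancel_left, fMonomial, fMonomial, abProd_add, abProd_succ,
    ← abProd_const]
  refine congr_arg₂ (· * ·) (congr_arg₂ (· * ·) ?_ ?_) ?_
  · refine abProd_congr fun i hi => ?_
    have : i ≤ j := (mem_Icc.1 hi).2
    rw [piecewise_eq_of_notMem]
    simp only [mem_insert, mem_image, not_or, not_exists, not_and]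
    exact ⟨by omega, fun t _ => by omega⟩
  · simp
  · refine abProd_congr fun i hi => ?_
    have : 1 ≤ i := (mem_Icc.1 hi).1
    have hmem : j + 1 + i ∈ insert (j + 1) (T.image (· + (j + 1))) ↔ i ∈ T := by
      simp only [mem_insert, mem_image]
      exact ⟨by rintro (h | ⟨t, ht, h⟩) <;> [omega; exact (by omega : t = i) ▸ ht],
        fun h => Or.inr ⟨i, h, by omega⟩⟩
    by_cases h : i ∈ T <;> simp [h, hmem]

lemma image_add_image_sub_erase {T : Finset ℕ} {m : ℕ} (hT : m ∈ lowerBounds (↑T : Set ℕ)) :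
    ((T.erase m).image (· - m)).image (· + m) = T.erase m := by
  rw [image_image]
  conv_rhs => rw [← image_id (s := T.erase m)]
  exact image_congr fun t ht => Nat.sub_add_cancel (hT (mem_of_mem_erase ht))

lemma image_sub_image_add (S : Finset ℕ) (m : ℕ) : (S.image (· + m)).image (· - m) = S := by
  simp [image_image, Function.comp_def]

lemma zero_notMem_image_sub_erase {T : Finset ℕ} {m : ℕ} (hT : m ∈ lowerBounds (↑T : Set ℕ)) :
    0 ∉ (T.erase m).image (· - m) := fun h => by
  obtain ⟨t, ht, ht0⟩ := mem_image.1 h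
  exact ne_of_mem_erase ht (le_antisymm (Nat.sub_eq_zero_iff_le.1 ht0) (hT (mem_of_mem_erase ht)))

lemma image_sub_erase_insert_image_add {S : Finset ℕ} (hS : 0 ∉ S) (m : ℕ) :
    ((insert m (S.image (· + m))).erase m).image (· - m) = S := by
  have hm : m ∉ S.image (· + m) := fun h => by
    obtain ⟨s, hs, hsm⟩ := mem_image.1 h
    exact hS ((by omega : s = 0) ▸ hs)
  rw [erase_insert hm, image_sub_image_add]

lemma sum_filter_isLeast_powerset_Icc {M : Type*} [AddCommMonoid M] {m n : ℕ} (hm : 1 ≤ m)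
    (hmn : m ≤ n) (g : Finset ℕ → M) :
    ∑ T ∈ (Icc 1 n).powerset.filter (fun T : Finset ℕ => IsLeast (↑T : Set ℕ) m), g T =
      ∑ S ∈ (Icc 1 (n - m)).powerset, g (insert m (S.image (· + m))) := by
  symm
  refine sum_nbij' (fun S => insert m (S.image (· + m))) (fun T => (T.erase m).image (· - m))
    (fun S hS => ?_) (fun T hT => ?_) (fun S hS => ?_) (fun T hT => ?_) fun _ _ => rfl
  · rw [mem_powerset] at hS
    rw [mem_filter, mem_powerset]
    refine ⟨insert_subset (mem_Icc.2 ⟨hm, hmn⟩) fun t ht => ?_, ⟨mem_insert_self _ _, ?_⟩⟩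
    · obtain ⟨s, hs, rfl⟩ := mem_image.1 ht
      have := mem_Icc.1 (hS hs)
      exact mem_Icc.2 ⟨by omega, by omega⟩
    · intro t ht
      rcases mem_insert.1 ht with rfl | ht
      · exact le_rfl
      · obtain ⟨s, -, rfl⟩ := mem_image.1 ht
        exact Nat.le_add_left m s
  · obtain ⟨hTI, hTm⟩ := mem_filter.1 hT
    refine mem_powerset.2 fun s hs => ?_
    obtain ⟨t, ht, rfl⟩ := mem_image.1 hs
    have := mem_Icc.1 (mem_powerset.1 hTI (mem_of_mem_erase ht))
    have := hTm.2 (mem_of_mem_erase ht)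
    have := ne_of_mem_erase ht
    exact mem_Icc.2 ⟨by omega, by omega⟩
  · exact image_sub_erase_insert_image_add (fun h => by simpa using mem_powerset.1 hS h) m
  · obtain ⟨-, hTm⟩ := mem_filter.1 hT
    rw [image_add_image_sub_erase hTm.2, insert_erase hTm.1]

noncomputable def flagChains (P : Type*) [PartialOrder P] [Fintype P] (ρ : P → ℕ) (S : Finset ℕ) :
    Finset (Finset P) :=
  univ.filter fun c => IsChain (· ≤ ·) (↑c : Set P) ∧ c.image ρ = S

section Chains

variable {P : Type*} [PartialOrder P] {ρ : P → ℕ}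

lemma IsChain.le_of_rank_le (hρ : StrictMono ρ) {s : Set P} (hs : IsChain (· ≤ ·) s) {x y : P}
    (hx : x ∈ s) (hy : y ∈ s) (hxy : ρ x ≤ ρ y) : x ≤ y := by
  rcases eq_or_ne x y with rfl | hne
  · exact le_rfl
  · exact (hs.total hx hy).resolve_right fun hyx => (hρ (lt_of_le_of_ne hyx hne.symm)).not_ge hxy

variable {x : P}

lemma map_subtype_image_rank (hρ : Monotone ρ) (c : Finset {y // x ≤ y}) :
    (c.map (Function.Embedding.subtype _)).image ρ =
      (c.image fun y => ρ y.1 - ρ x).image (· + ρ x) := by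
  rw [map_eq_image, image_image, image_image]
  exact image_congr fun y _ => (Nat.sub_add_cancel (hρ y.2)).symm

variable [Fintype P]

lemma flagF_eq_card_flagChains (S : Finset ℕ) : flagF P ρ S = #(flagChains P ρ S) := by
  rw [flagF, flagChains, ← Set.ncard_coe_finset, coe_filter]
  simp

lemma flagF_empty : flagF P ρ ∅ = 1 := by
  rw [flagF_eq_card_flagChains, Nat.cast_eq_one, card_eq_one]
  refine ⟨∅, ext fun c => ?_⟩
  simp only [flagChains, mem_filter, mem_univ, true_and, image_eq_empty, mem_singleton]
  exact ⟨And.right, fun h => ⟨by simp [h], h⟩⟩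

lemma le_of_mem_flagChains (hρ : StrictMono ρ) {T : Finset ℕ} (hT : IsLeast ↑T (ρ x))
    {c : Finset P} (hc : c ∈ flagChains P ρ T) (hxc : x ∈ c) {y : P} (hyc : y ∈ c) : x ≤ y := by
  simp only [flagChains, mem_filter, mem_univ, true_and] at hc
  exact hc.1.le_of_rank_le hρ hxc hyc (hT.2 (hc.2 ▸ mem_image_of_mem ρ hyc))

lemma insert_map_subtype_mem_flagChains (hρ : StrictMono ρ) {T : Finset ℕ} (hT : IsLeast ↑T (ρ x))
    {c : Finset {y // x ≤ y}}
    (hc : c ∈ flagChains {y // x ≤ y} (fun y => ρ y.1 - ρ x) ((T.erase (ρ x)).image (· - ρ x))) :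
    insert x (c.map (Function.Embedding.subtype _)) ∈ flagChains P ρ T := by
  simp only [flagChains, mem_filter, mem_univ, true_and] at hc ⊢
  refine ⟨?_, ?_⟩
  · rw [coe_insert, coe_map]
    refine (hc.1.image_of_map_rel _ _ (Function.Embedding.subtype _) fun _ _ h => h).insert
      fun b hb _ => Or.inl ?_
    obtain ⟨y, -, rfl⟩ := hb
    exact y.2
  · rw [image_insert, map_subtype_image_rank hρ.monotone, hc.2, image_add_image_sub_erase hT.2,
      insert_erase hT.1]

lemma subtype_erase_mem_flagChains (hρ : StrictMono ρ) {T : Finset ℕ} (hT : IsLeast ↑T (ρ x))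
    {c : Finset P} (hc : c ∈ (flagChains P ρ T).filter (x ∈ ·)) :
    (c.erase x).subtype (x ≤ ·) ∈
      flagChains {y // x ≤ y} (fun y => ρ y.1 - ρ x) ((T.erase (ρ x)).image (· - ρ x)) := by
  obtain ⟨hcT, hxc⟩ := mem_filter.1 hc
  have hle : ∀ y ∈ c.erase x, x ≤ y := fun y hy =>
    le_of_mem_flagChains hρ hT hcT hxc (mem_of_mem_erase hy)
  simp only [flagChains, mem_filter, mem_univ, true_and] at hcT ⊢
  obtain ⟨hchain, himage⟩ := hcT
  have herase : (c.erase x).image ρ = T.erase (ρ x) := by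
    ext t
    simp only [mem_image, mem_erase, ← himage]
    constructor
    · rintro ⟨y, ⟨hyx, hyc⟩, rfl⟩
      refine ⟨fun h => hyx ?_, y, hyc, rfl⟩
      exact le_antisymm (hchain.le_of_rank_le hρ hyc hxc h.le) (hle y (mem_erase.2 ⟨hyx, hyc⟩))
    · rintro ⟨htx, y, hyc, rfl⟩
      exact ⟨y, ⟨fun h => htx (h ▸ rfl), hyc⟩, rfl⟩
  refine ⟨fun y hy z hz hne => hchain (mem_of_mem_erase (mem_subtype.1 hy))
    (mem_of_mem_erase (mem_subtype.1 hz)) (Subtype.coe_ne_coe.2 hne), ?_⟩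
  have himage' := map_subtype_image_rank hρ.monotone ((c.erase x).subtype (x ≤ ·))
  rw [subtype_map_of_mem hle, herase] at himage'
  rw [himage', image_sub_image_add]

lemma card_filter_mem_flagChains (hρ : StrictMono ρ) {T : Finset ℕ} (hT : IsLeast ↑T (ρ x)) :
    #((flagChains P ρ T).filter (x ∈ ·)) =
      #(flagChains {y // x ≤ y} (fun y => ρ y.1 - ρ x) ((T.erase (ρ x)).image (· - ρ x))) := by
  refine card_bij' (fun c _ => (c.erase x).subtype (x ≤ ·))
    (fun c _ => insert x (c.map (Function.Embedding.subtype _)))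
    (fun c hc => subtype_erase_mem_flagChains hρ hT hc)
    (fun c hc => mem_filter.2 ⟨insert_map_subtype_mem_flagChains hρ hT hc, mem_insert_self _ _⟩)
    (fun c hc => ?_) (fun c hc => ?_)
  · obtain ⟨hcT, hxc⟩ := mem_filter.1 hc
    rw [subtype_map_of_mem fun y hy => le_of_mem_flagChains hρ hT hcT hxc (mem_of_mem_erase hy),
      insert_erase hxc]
  · have hx : x ∉ c.map (Function.Embedding.subtype _) := fun h => by
      obtain ⟨y, hyc, hyx⟩ := mem_map.1 h
      refine zero_notMem_image_sub_erase hT.2 ?_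
      rw [← (mem_filter.1 hc).2.2]
      exact mem_image.2 ⟨y, hyc, by simp [← hyx]⟩
    rw [erase_insert hx]
    ext y
    simp [y.2]

lemma flagF_eq_sum_flagF_Ici (hρ : StrictMono ρ) {T : Finset ℕ} (hT : T.Nonempty) :
    flagF P ρ T = ∑ x ∈ univ.filter (fun x => IsLeast ↑T (ρ x)),
      flagF {y // x ≤ y} (fun y => ρ y.1 - ρ x) ((T.erase (ρ x)).image (· - ρ x)) := by
  have hcover : flagChains P ρ T = (univ.filter fun x => IsLeast ↑T (ρ x)).biUnion
      fun x => (flagChains P ρ T).filter (x ∈ ·) := by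
    ext c
    simp only [mem_biUnion, mem_filter, mem_univ, true_and]
    refine ⟨fun hc => ?_, fun ⟨_, _, hc, _⟩ => hc⟩
    have hmin : T.min' hT ∈ c.image ρ := (mem_filter.1 hc).2.2 ▸ T.min'_mem hT
    obtain ⟨x, hxc, hx⟩ := mem_image.1 hmin
    exact ⟨x, hx ▸ T.isLeast_min' hT, hc, hxc⟩
  have hdisj : (↑(univ.filter fun x => IsLeast ↑T (ρ x)) : Set P).PairwiseDisjoint
      fun x => (flagChains P ρ T).filter (x ∈ ·) := by
    intro x hx x' hx' hne
    simp only [coe_filter, mem_univ, true_and, Set.mem_ofPred_eq] at hx hx'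
    refine disjoint_left.2 fun c hc hc' => hne ?_
    obtain ⟨hcT, hxc⟩ := mem_filter.1 hc
    obtain ⟨-, hx'c⟩ := mem_filter.1 hc'
    exact le_antisymm (le_of_mem_flagChains hρ hx hcT hxc hx'c)
      (le_of_mem_flagChains hρ hx' hcT hx'c hxc)
  rw [flagF_eq_card_flagChains, hcover, card_biUnion hdisj, Nat.cast_sum]
  refine sum_congr rfl fun x hx => ?_
  rw [flagF_eq_card_flagChains, card_filter_mem_flagChains hρ (mem_filter.1 hx).2]

end Chains

lemma mul_Psi_Ici_eq_sum {P : Type*} [PartialOrder P] {ρ : P → ℕ} {n : ℕ} {x : P}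
    (hx : ρ x ∈ Icc 1 n) :
    (aV - bV) ^ (ρ x - 1) * bV * Psi {y // x ≤ y} (fun y => ρ y.1 - ρ x) (n - ρ x) =
      ∑ T ∈ (Icc 1 n).powerset.filter (fun T : Finset ℕ => IsLeast (↑T : Set ℕ) (ρ x)),
        flagF {y // x ≤ y} (fun y => ρ y.1 - ρ x) ((T.erase (ρ x)).image (· - ρ x)) •
          fMonomial n T := by
  obtain ⟨hx1, hxn⟩ := mem_Icc.1 hx
  rw [Psi_eq_sum_flagF_smul_fMonomial, mul_sum, sum_filter_isLeast_powerset_Icc hx1 hxn]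
  refine sum_congr rfl fun S hS => ?_
  rw [image_sub_erase_insert_image_add (fun h => by simpa using mem_powerset.1 hS h),
    fMonomial_insert_image_add hx1 hxn, mul_smul_comm]

lemma bot_lt_and_lt_top_iff_rank_mem_Icc {P : Type*} [PartialOrder P] [BoundedOrder P]
    {ρ : P → ℕ} {n : ℕ} (hρ : StrictMono ρ) (hbot : ρ ⊥ = 0) (htop : ρ ⊤ = n + 1) (x : P) :
    ⊥ < x ∧ x < ⊤ ↔ ρ x ∈ Icc 1 n := by
  rw [mem_Icc]
  refine ⟨fun ⟨h1, h2⟩ => ?_, fun ⟨h1, h2⟩ => ⟨bot_lt_iff_ne_bot.2 ?_, lt_top_iff_ne_top.2 ?_⟩⟩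
  · have := hρ h1
    have := hρ h2
    omega
  · rintro rfl
    omega
  · rintro rfl
    omega

theorem Psi_recursion_general (n : ℕ) (P : Type*) [Fintype P] [PartialOrder P]
    [BoundedOrder P] (ρ : P → ℕ)
    (hbot : ρ ⊥ = 0) (htop : ρ ⊤ = n + 1)
    (hstrict : ∀ x y : P, x < y → ρ x < ρ y) :
    Psi P ρ n =
      (aV - bV) ^ n +
        ∑ x ∈ Finset.univ.filter (fun x : P => ⊥ < x ∧ x < ⊤),
          (aV - bV) ^ (ρ x - 1) * bV *
            Psi {y : P // x ≤ y} (fun y => ρ y.1 - ρ x) (n - ρ x) := by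
  have hρ : StrictMono ρ := fun x y => hstrict x y
  have hproper := bot_lt_and_lt_top_iff_rank_mem_Icc hρ hbot htop
  rw [Psi_eq_sum_flagF_smul_fMonomial, ← add_sum_erase _ _ (empty_mem_powerset _), flagF_empty,
    one_smul, fMonomial_empty,
    sum_congr rfl fun x hx => mul_Psi_Ici_eq_sum ((hproper x).1 (mem_filter.1 hx).2),
    sum_comm' (t' := (Icc 1 n).powerset.erase ∅)
      (s' := fun T => univ.filter fun x => IsLeast ↑T (ρ x))]
  · refine congrArg _ (sum_congr rfl fun T hT => ?_)
    rw [flagF_eq_sum_flagF_Ici hρ (nonempty_iff_ne_empty.2 (ne_of_mem_erase hT)), sum_smul]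
  · intro x T
    simp only [mem_filter, mem_univ, true_and, mem_erase, mem_powerset, hproper]
    exact ⟨fun ⟨_, hT, hxT⟩ => ⟨hxT, ne_empty_of_mem hxT.1, hT⟩,
      fun ⟨hxT, _, hT⟩ => ⟨hT hxT.1, hT, hxT⟩⟩

/-- Stanley's recursion for the `ab`-index of a graded poset:
`Ψ(P) = (a-b)^{ρ(P)-1} + ∑_{0̂ < x < 1̂} (a-b)^{ρ(x)-1} ⬝ b ⬝ Ψ([x,1̂])`. -/
theorem Psi_recursion (n : ℕ) (P : Type*) [Fintype P] [PartialOrder P]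
    [BoundedOrder P] (ρ : P → ℕ)
    (hbot : ρ ⊥ = 0) (htop : ρ ⊤ = n + 1)
    (hstrict : ∀ x y : P, x < y → ρ x < ρ y)
    (hcov : ∀ x y : P, x ⋖ y → ρ y = ρ x + 1) :
    Psi P ρ n =
      (aV - bV) ^ n +
        ∑ x ∈ Finset.univ.filter (fun x : P => ⊥ < x ∧ x < ⊤),
          (aV - bV) ^ (ρ x - 1) * bV *
            Psi {y : P // x ≤ y} (fun y => ρ y.1 - ρ x) (n - ρ x) :=
  Psi_recursion_general n P ρ hbot htop hstrict
end

section
/- Let \varphi_{ub} be defined by \varphi_{ub}(v) = \varphi(v) - 2\sum_v \varphi(v_{(1)}) \cdot b \cdot \beta(v_{(2)}) where \varphi is the Billera–Ehrenborg–Readdy map and \beta(b^m)=(a-b)^m, \beta=0 otherwise. Then \varphi_{ub}(v\cdot ab) = 0 for every ab-monomial v. -/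
/-- The map `β`, sending `b^m ↦ (a-b)^m` and all other monomials to `0`. -/
noncomputable def betaMon (l : List Bool) : AB :=
  if l.all (· = true) then (aV - bV) ^ l.length else 0

/-- Given the Billera–Ehrenborg–Readdy map `φ` (determined on `ab`-monomials by
its recursions), the map `φ_ub(v) = φ(v) - 2 ∑ φ(v₍₁₎) ⬝ b ⬝ β(v₍₂₎)` vanishes on
every monomial of the form `v ⬝ ab`. -/
theorem phi_ub_vanishes_on_ab (φ : List Bool → AB)
    (hone : φ [] = 1)
    (hbsingle : φ [true] = 2 • bV)
    (hrec_a : ∀ v : List Bool, φ (v ++ [false]) = φ v * (aV + bV))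
    (hrec_bb : ∀ v : List Bool, φ (v ++ [true, true]) = φ (v ++ [true]) * (aV + bV))
    (hrec_ab : ∀ v : List Bool,
      φ (v ++ [false, true]) = φ v * (2 * (aV * bV + bV * aV))) :
    ∀ v : List Bool,
      (fun w : List Bool =>
        φ w - 2 * ∑ i ∈ Finset.range w.length,
          φ (w.take i) * bV * betaMon (w.drop (i + 1))) (v ++ [false, true]) = 0 := by
  intro v
  simp only
  have hlen : (v ++ [false, true]).length = v.length + 2 := by simp
  rw [hlen]
  have hsum : ∑ i ∈ Finset.range (v.length + 2),
      φ ((v ++ [false, true]).take i) * bV * betaMon ((v ++ [false, true]).drop (i + 1))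
      = φ v * bV * (aV - bV) + φ v * (aV + bV) * bV := by
    rw [Finset.sum_range_succ, Finset.sum_range_succ]
    have h0 : ∀ i ∈ Finset.range v.length,
        φ ((v ++ [false, true]).take i) * bV *
          betaMon ((v ++ [false, true]).drop (i + 1)) = 0 := by
      intro i hi
      rw [Finset.mem_range] at hi
      have hdrop : (v ++ [false, true]).drop (i + 1) = v.drop (i + 1) ++ [false, true] :=
        List.drop_append_of_le_length (by omega)
      rw [hdrop]
      have hb : betaMon (v.drop (i + 1) ++ [false, true]) = 0 := by simp [betaMon]
      rw [hb, mul_zero]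
    rw [Finset.sum_eq_zero h0, zero_add]
    have h1 : (v ++ [false, true]).take v.length = v := by simp
    have h2 : (v ++ [false, true]).drop (v.length + 1) = [true] := by
      simp [List.drop_append]
    have h3 : (v ++ [false, true]).take (v.length + 1) = v ++ [false] := by
      simp [List.take_append]
    have h4 : (v ++ [false, true]).drop (v.length + 1 + 1) = [] := by
      simp [List.drop_append]
      omega
    rw [h1, h2, h3, h4, hrec_a]
    have hb1 : betaMon [true] = aV - bV := by simp [betaMon]
    have hb0 : betaMon [] = 1 := by simp [betaMon]
    rw [hb1, hb0, mul_one]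
  rw [hsum, hrec_ab]
  noncomm_ring
end

section
/- Let V = {v \in R^n : Av = b} be a k-dimensional affine subspace where A is a rational matrix. Then the image of V under the quotient map R^n \to R^n/Z^n is homeomorphic to a k-dimensional torus R^k/Z^k. -/
/-!
The kernel `W` of `A` is spanned by integer vectors: expanding the entries of a real solution of
`A v = 0` in a `ℚ`-basis of the `ℚ`-span they generate writes `v` as a real combination of rational
solutions, and these can be scaled to integer ones. So `W ∩ ℤ^n` is a lattice in `W`, and a
`ℤ`-basis of it gives a linear map `φ : ℝ^k → ℝ^n` onto `W` with `φ⁻¹(ℤ^n) = ℤ^k`. The map it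
induces on tori, translated by a point of `V`, is then a continuous injection of the compact
space `ℝ^k/ℤ^k` into the Hausdorff space `ℝ^n/ℤ^n` whose image is the image of `V`.
-/

/-- The integer lattice `ℤ^n` inside `ℝ^n`. -/
def intLattice (n : ℕ) : AddSubgroup (Fin n → ℝ) :=
  AddSubgroup.pi Set.univ fun _ => AddSubgroup.zmultiples (1 : ℝ)

/-- The `n`-dimensional torus `ℝ^n/ℤ^n`. -/
abbrev Torus (n : ℕ) := (Fin n → ℝ) ⧸ intLattice n

open Module Submodule

theorem mem_intLattice {n : ℕ} {x : Fin n → ℝ} :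
    x ∈ intLattice n ↔ ∀ i, ∃ z : ℤ, (z : ℝ) = x i := by
  simp [intLattice, AddSubgroup.mem_pi, AddSubgroup.mem_zmultiples_iff]

theorem intLattice_eq_span_basisFun (n : ℕ) :
    intLattice n = (span ℤ (Set.range (Pi.basisFun ℝ (Fin n)))).toAddSubgroup := by
  ext x
  simp [mem_intLattice, (Pi.basisFun ℝ (Fin n)).mem_span_iff_repr_mem ℤ]

instance (n : ℕ) : DiscreteTopology (intLattice n) := by
  rw [intLattice_eq_span_basisFun]
  infer_instance

instance (n : ℕ) : CompactSpace (Torus n) := by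
  refine ⟨?_⟩
  rw [← QuotientAddGroup.mk_surjective.range_eq]
  refine IsZLattice.isCompact_range_of_periodic (span ℤ (Set.range (Pi.basisFun ℝ (Fin n)))) _
    continuous_quot_mk fun z w hw => ?_
  exact QuotientAddGroup.mk_add_of_mem z (by rw [intLattice_eq_span_basisFun]; exact hw)

instance (n : ℕ) : T2Space (Torus n) :=
  have : IsClosed (intLattice n : Set (Fin n → ℝ)) := AddSubgroup.isClosed_of_discrete
  inferInstance

namespace QuotientAddGroup

variable {G H : Type*} [AddGroup G] [AddGroup H] (Γ : AddSubgroup G) (Λ : AddSubgroup H)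
  [Γ.Normal] [Λ.Normal] {f : G →+ H}

theorem continuous_map [TopologicalSpace G] [TopologicalSpace H] (hf : Continuous f)
    (h : Γ ≤ Λ.comap f) : Continuous (map Γ Λ f h) :=
  (isQuotientMap_mk Γ).continuous_iff.2 (continuous_quot_mk.comp hf)

theorem map_injective_of_comap_eq (h : Λ.comap f = Γ) : Function.Injective (map Γ Λ f h.ge) := by
  refine (injective_iff_map_eq_zero _).2 fun x => ?_
  induction x using QuotientAddGroup.induction_on with
  | H x =>
    rw [map_mk, eq_zero_iff, eq_zero_iff, ← h]
    exact id

theorem range_map (h : Γ ≤ Λ.comap f) : Set.range (map Γ Λ f h) = (↑) '' Set.range f := by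
  rw [← mk_surjective.range_comp, ← Set.range_comp]
  rfl

end QuotientAddGroup

theorem LinearMap.preimage_singleton_eq_image_add_ker {R M N : Type*} [Ring R] [AddCommGroup M]
    [AddCommGroup N] [Module R M] [Module R N] (f : M →ₗ[R] N) (a : M) :
    f ⁻¹' {f a} = (a + ·) '' ker f := by
  ext x
  constructor
  · intro hx
    exact ⟨x - a, by simp_all, add_sub_cancel a x⟩
  · rintro ⟨y, hy, rfl⟩
    simp_all

theorem exists_eq_sum_smul_ratCast_respecting_rat_relations {ι : Type*} [Fintype ι]
    (v : ι → ℝ) :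
    ∃ (d : ℕ) (r : Fin d → ℝ) (c : Fin d → ι → ℚ),
      v = ∑ i, r i • (fun j => (c i j : ℝ)) ∧
      ∀ q : ι → ℚ, ∑ j, (q j : ℝ) * v j = 0 → ∀ i, ∑ j, q j * c i j = 0 := by
  let S := span ℚ (Set.range v)
  have : FiniteDimensional ℚ S := FiniteDimensional.span_of_finite ℚ (Set.finite_range v)
  let e := Module.finBasis ℚ S
  let w : ι → S := fun j => ⟨v j, subset_span ⟨j, rfl⟩⟩
  refine ⟨_, fun i => e i, fun i j => e.repr (w j) i, ?_, fun q hq i => ?_⟩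
  · ext j
    have h := congrArg Subtype.val (e.sum_repr (w j))
    rw [coe_sum] at h
    simp only [Finset.sum_apply, Pi.smul_apply, smul_eq_mul]
    refine h.symm.trans (Finset.sum_congr rfl fun i _ => ?_)
    rw [coe_smul, Rat.smul_def, mul_comm]
  · have h0 : ∑ j, q j • w j = 0 := Subtype.ext (by simpa [Rat.smul_def] using hq)
    simpa using congrArg (fun x => e.repr x i) h0

theorem exists_smul_ratCast_mem_intLattice {n : ℕ} (q : Fin n → ℚ) :
    ∃ N : ℤ, N ≠ 0 ∧ (N : ℝ) • (fun j => (q j : ℝ)) ∈ intLattice n := by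
  obtain ⟨N, hN⟩ := IsLocalization.exist_integer_multiples_of_finite (nonZeroDivisors ℤ) q
  refine ⟨N, nonZeroDivisors.coe_ne_zero N, mem_intLattice.2 fun j => ?_⟩
  obtain ⟨z, hz⟩ := hN j
  exact ⟨z, by simpa using congrArg ((↑) : ℚ → ℝ) hz⟩

theorem span_ker_inter_intLattice_of_rat {m n : ℕ} {A : Matrix (Fin m) (Fin n) ℝ}
    (hrat : ∀ i j, ∃ q : ℚ, A i j = (q : ℝ)) :
    span ℝ ((LinearMap.ker A.mulVecLin : Set (Fin n → ℝ)) ∩ intLattice n) =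
      LinearMap.ker A.mulVecLin := by
  choose Aq hAq using hrat
  refine le_antisymm (span_le.2 Set.inter_subset_left) fun v hv => ?_
  obtain ⟨d, r, c, hrc, hc⟩ := exists_eq_sum_smul_ratCast_respecting_rat_relations v
  have hker : ∀ i, (fun j => (c i j : ℝ)) ∈ LinearMap.ker A.mulVecLin := fun i => by
    ext l
    have := hc (Aq l) (by simpa [Matrix.mulVec, dotProduct, hAq] using congrFun hv l) i
    simpa [Matrix.mulVec, dotProduct, hAq] using congrArg ((↑) : ℚ → ℝ) this
  rw [hrc]
  refine sum_mem fun i _ => smul_mem _ _ ?_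
  obtain ⟨N, hN0, hN⟩ := exists_smul_ratCast_mem_intLattice (c i)
  rw [← inv_smul_smul₀ (Int.cast_ne_zero.2 hN0 : (N : ℝ) ≠ 0) (fun j => (c i j : ℝ))]
  exact smul_mem _ _ (subset_span ⟨smul_mem _ _ (hker i), hN⟩)

theorem ZLattice.exists_linearEquiv_mem_iff_mem_intLattice {E : Type*} [NormedAddCommGroup E]
    [NormedSpace ℝ E] [FiniteDimensional ℝ E] (L : Submodule ℤ E) [DiscreteTopology L]
    [IsZLattice ℝ L] :
    ∃ e : (Fin (finrank ℝ E) → ℝ) ≃ₗ[ℝ] E, ∀ x, e x ∈ L ↔ x ∈ intLattice (finrank ℝ E) := by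
  have hcard : Fintype.card (Free.ChooseBasisIndex ℤ L) = finrank ℝ E := by
    rw [← finrank_eq_card_chooseBasisIndex, ZLattice.rank ℝ L]
  let b := (Free.chooseBasis ℤ L).reindex (Fintype.equivFinOfCardEq hcard)
  refine ⟨(b.ofZLatticeBasis ℝ L).equivFun.symm, fun x => ?_⟩
  have h := (b.ofZLatticeBasis ℝ L).mem_span_iff_repr_mem ℤ
    ((b.ofZLatticeBasis ℝ L).equivFun.symm x)
  rw [b.ofZLatticeBasis_span ℝ L] at h
  rw [h, mem_intLattice]
  simp only [← Basis.equivFun_apply, LinearEquiv.apply_symm_apply, Set.mem_range,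
    algebraMap_int_eq, eq_intCast]

theorem exists_linearMap_range_eq_comap_intLattice_eq {n k : ℕ} (W : Submodule ℝ (Fin n → ℝ))
    (hW : span ℝ ((W : Set (Fin n → ℝ)) ∩ intLattice n) = W) (hk : finrank ℝ W = k) :
    ∃ φ : (Fin k → ℝ) →ₗ[ℝ] (Fin n → ℝ),
      LinearMap.range φ = W ∧ (intLattice n).comap φ.toAddMonoidHom = intLattice k := by
  subst hk
  let L : Submodule ℤ W := (intLattice n).toIntSubmodule.comap (W.subtype.restrictScalars ℤ)
  have : DiscreteTopology (intLattice n : Set (Fin n → ℝ)) :=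
    inferInstanceAs (DiscreteTopology (intLattice n))
  have : DiscreteTopology L :=
    DiscreteTopology.preimage_of_continuous_injective (intLattice n : Set (Fin n → ℝ))
      continuous_subtype_val Subtype.val_injective
  have : IsZLattice ℝ L := ⟨by
    refine map_injective_of_injective W.injective_subtype ?_
    rw [map_span, Submodule.map_top, range_subtype]
    conv_rhs => rw [← hW]
    congr 1
    ext x
    simp [L, and_comm]⟩
  obtain ⟨e, he⟩ := ZLattice.exists_linearEquiv_mem_iff_mem_intLattice L
  refine ⟨W.subtype ∘ₗ e.toLinearMap, ?_, AddSubgroup.ext fun x => he x⟩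
  rw [LinearMap.range_comp, LinearEquiv.range, Submodule.map_top, range_subtype]

/-- The image of a `k`-dimensional affine subspace `V = {v : Av = b}` with rational
coefficient matrix `A` under the quotient map `ℝ^n → ℝ^n/ℤ^n` is homeomorphic to a
`k`-dimensional torus `ℝ^k/ℤ^k`. -/
theorem image_rational_affine_subspace_homeomorph_torus
    (n m k : ℕ) (A : Matrix (Fin m) (Fin n) ℝ)
    (hrat : ∀ i j, ∃ q : ℚ, A i j = (q : ℝ)) (b : Fin m → ℝ)
    (V : Set (Fin n → ℝ)) (hV : V = {v | A.mulVec v = b}) (hne : V.Nonempty)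
    (hdim : Module.finrank ℝ (LinearMap.ker A.mulVecLin) = k) :
    Nonempty
      ((((QuotientAddGroup.mk : (Fin n → ℝ) → Torus n) '' V : Set (Torus n))) ≃ₜ Torus k) := by
  obtain ⟨v₀, hv₀⟩ := hne
  subst hV
  obtain ⟨φ, hφW, hφZ⟩ :=
    exists_linearMap_range_eq_comap_intLattice_eq _ (span_ker_inter_intLattice_of_rat hrat) hdim
  let Φ := QuotientAddGroup.map _ _ φ.toAddMonoidHom hφZ.ge
  let Ψ : Torus k → Torus n := ((v₀ : Torus n) + ·) ∘ Φ
  have hΦ : Continuous Φ := QuotientAddGroup.continuous_map _ _ φ.continuous_of_finiteDimensional _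
  have hΨ : Continuous Ψ := (continuous_const_add _).comp hΦ
  have hΨinj : Function.Injective Ψ :=
    (add_right_injective _).comp (QuotientAddGroup.map_injective_of_comap_eq _ _ hφZ)
  have hrange : Set.range Ψ = (↑) '' {v | A.mulVec v = b} := by
    have hV : {v | A.mulVec v = b} = A.mulVecLin ⁻¹' {A.mulVecLin v₀} := by
      ext v
      simp [hv₀.out]
    rw [hV, LinearMap.preimage_singleton_eq_image_add_ker, ← hφW, Set.range_comp,
      QuotientAddGroup.range_map, Set.image_image, Set.image_image]
    simp only [QuotientAddGroup.mk_add, LinearMap.coe_range]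
    rfl
  exact ⟨((hΨ.isClosedEmbedding hΨinj).isEmbedding.toHomeomorph.trans
    (Homeomorph.setCongr hrange)).symm⟩
end
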